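/- arXiv:2301.04863 — 4 statements merged into one kernel-verified Lean document; each statement's English description precedes it below -/
import Mathlib

section
/- Let μ be a probability measure on a measurable space X and let Φ¹, Φ² : X → [0,∞) be measurable functions in L¹_μ. Then d_KL(μ_{Φ¹} ‖ μ_{Φ²}) ≤ 2·exp(‖Φ¹‖_{L¹_μ} + ‖Φ¹ − Φ²‖_{L¹_μ})·‖Φ¹ − Φ²‖_{L¹_μ}, so μ_{Φ¹} is absolutely continuous with respect to μ_{Φ²}. In particular, max{d_KL(μ_{Φ¹} ‖ μ_{Φ²}), d_KL(μ_{Φ²} ‖ μ_{Φ¹})} ≤ 2·exp(2‖Φ¹‖_{L¹_μ} + 2‖Φ²‖_{L¹_μ})·‖Φ¹ − Φ²‖_{L¹_μ}, and μ_{Φ¹} and μ_{Φ²} are mutually equivalent. -/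
open MeasureTheory Real ENNReal

open Classical in
/-- Kullback--Leibler divergence: `∫ log (dμ/dν) dμ` if `μ ≪ ν` (and the log-likelihood
ratio is integrable, in which case the value is finite), and `+∞` otherwise. -/
noncomputable def KLdiv {X : Type*} [MeasurableSpace X] (μ ν : Measure X) : ℝ≥0∞ :=
  if μ ≪ ν ∧ Integrable (fun x => Real.log ((μ.rnDeriv ν x).toReal)) μ
  then ENNReal.ofReal (∫ x, Real.log ((μ.rnDeriv ν x).toReal) ∂μ)
  else ⊤

/-- The measure `μ_Φ` with density `exp (-Φ) / Z` with respect to `μ`,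
where `Z = ∫ exp (-Φ) dμ`. -/
noncomputable def posterior {X : Type*} [MeasurableSpace X] (μ : Measure X) (Φ : X → ℝ) :
    Measure X :=
  μ.withDensity fun x => ENNReal.ofReal (Real.exp (-Φ x) / ∫ x', Real.exp (-Φ x') ∂μ)

/-!
`μ_Φ` is the exponential tilting of `μ` by `-Φ`, so `log (dμ_Φ₁/dμ_Φ₂) = Φ₂ - Φ₁ + log (Z₂ / Z₁)`
and the divergence is `∫ (Φ₂ - Φ₁) dμ_Φ₁ + log (Z₂ / Z₁)`. Since `exp (-Φ₁) ≤ 1`, the first term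
is at most `‖Φ₁ - Φ₂‖₁ / Z₁`; since `exp (-·)` is `1`-Lipschitz on `[0, ∞)`, `Z₂ - Z₁ ≤ ‖Φ₁ - Φ₂‖₁`
and `log (Z₂ / Z₁) ≤ Z₂ / Z₁ - 1` bounds the second term by the same quantity. Finally Jensen's
inequality gives `exp (-‖Φ₁‖₁) ≤ Z₁`, so the divergence is at most `2 exp ‖Φ₁‖₁ ‖Φ₁ - Φ₂‖₁`,
which is below both stated bounds.
-/

lemma posterior_eq_tilted {X : Type*} [MeasurableSpace X] (μ : Measure X) (Φ : X → ℝ) :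
    posterior μ Φ = μ.tilted (fun x => -Φ x) := rfl

section Tilted

variable {X : Type*} [MeasurableSpace X] {μ : Measure X} {f g : X → ℝ}

lemma tilted_absolutelyContinuous_tilted (hg : Integrable (fun x => exp (g x)) μ) :
    μ.tilted f ≪ μ.tilted g :=
  (tilted_absolutelyContinuous μ f).trans (absolutelyContinuous_tilted hg)

variable [IsProbabilityMeasure μ]

lemma llr_tilted_tilted (hf : Integrable (fun x => exp (f x)) μ)
    (hg : Integrable (fun x => exp (g x)) μ) :
    llr (μ.tilted f) (μ.tilted g) =ᵐ[μ.tilted f]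
      fun x => f x - g x + (log (∫ x, exp (g x) ∂μ) - log (∫ x, exp (f x) ∂μ)) := by
  have := isProbabilityMeasure_tilted hf
  have hfμ := tilted_absolutelyContinuous μ f
  filter_upwards [llr_tilted_right hfμ hg, hfμ.ae_le (log_rnDeriv_tilted_left_self hf)]
    with x hright hleft
  rw [hright, llr, hleft]
  ring

lemma KLdiv_tilted_tilted (hf : Integrable (fun x => exp (f x)) μ)
    (hg : Integrable (fun x => exp (g x)) μ) (hfg : Integrable (fun x => f x - g x) (μ.tilted f)) :
    KLdiv (μ.tilted f) (μ.tilted g) = ENNReal.ofReal (∫ x, (f x - g x) ∂μ.tilted f +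
      (log (∫ x, exp (g x) ∂μ) - log (∫ x, exp (f x) ∂μ))) := by
  have := isProbabilityMeasure_tilted hf
  have hllr := llr_tilted_tilted hf hg
  rw [KLdiv, if_pos ⟨tilted_absolutelyContinuous_tilted hg,
    (hfg.add (integrable_const _)).congr hllr.symm⟩]
  change ENNReal.ofReal (∫ x, llr (μ.tilted f) (μ.tilted g) x ∂μ.tilted f) = _
  rw [integral_congr_ae hllr, integral_add hfg (integrable_const _), integral_const,
    probReal_univ, one_smul]

end Tilted

lemma exp_neg_sub_exp_neg_le_abs {a b : ℝ} (hb : 0 ≤ b) : exp (-b) - exp (-a) ≤ |a - b| := by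
  have hexp : exp (-a) = exp (-b) * exp (b - a) := by rw [← exp_add]; ring_nf
  calc exp (-b) - exp (-a) ≤ exp (-b) * (a - b) := by
        nlinarith [add_one_le_exp (b - a), exp_pos (-b)]
    _ ≤ exp (-b) * |a - b| := by gcongr; exact le_abs_self _
    _ ≤ |a - b| := mul_le_of_le_one_left (abs_nonneg _) (exp_le_one_iff.2 (by linarith))

section Potential

variable {X : Type*} [MeasurableSpace X] {μ : Measure X} {Φ Ψ : X → ℝ}

lemma integrable_exp_neg [IsFiniteMeasure μ] (hΦ0 : ∀ x, 0 ≤ Φ x) (hΦ : AEMeasurable Φ μ) :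
    Integrable (fun x => exp (-Φ x)) μ :=
  .of_bound (by fun_prop) 1 (ae_of_all _ fun x => by
    simpa [abs_of_pos (exp_pos _)] using hΦ0 x)

lemma integrable_posterior [IsFiniteMeasure μ] (hΦ0 : ∀ x, 0 ≤ Φ x) (hΦ : AEMeasurable Φ μ)
    {h : X → ℝ} (hh : Integrable h μ) : Integrable h (posterior μ Φ) := by
  rw [posterior_eq_tilted, integrable_tilted_iff (integrable_exp_neg hΦ0 hΦ)]
  exact hh.bdd_smul (φ := fun x => exp (-Φ x)) 1 (by fun_prop) (ae_of_all _ fun x => by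
    simpa [abs_of_pos (exp_pos _)] using hΦ0 x)

variable [IsProbabilityMeasure μ]

lemma exp_neg_integral_le_integral_exp_neg (hΦ : Integrable Φ μ)
    (hexp : Integrable (fun x => exp (-Φ x)) μ) :
    exp (-∫ x, Φ x ∂μ) ≤ ∫ x, exp (-Φ x) ∂μ := by
  rw [← integral_neg]
  exact convexOn_exp.map_integral_le continuous_exp.continuousOn isClosed_univ (by simp)
    hΦ.neg hexp

lemma integral_sub_posterior_le (hΦ0 : ∀ x, 0 ≤ Φ x) (hΦ : Integrable Φ μ)
    (hΨ : Integrable Ψ μ) :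
    ∫ x, (Ψ x - Φ x) ∂posterior μ Φ ≤ (∫ x, |Φ x - Ψ x| ∂μ) / ∫ x, exp (-Φ x) ∂μ := by
  set Z := ∫ x, exp (-Φ x) ∂μ
  have hZ : 0 < Z := integral_exp_pos (integrable_exp_neg hΦ0 hΦ.aemeasurable)
  calc ∫ x, (Ψ x - Φ x) ∂posterior μ Φ ≤ ∫ x, |Φ x - Ψ x| ∂posterior μ Φ :=
        integral_mono (integrable_posterior hΦ0 hΦ.aemeasurable (hΨ.sub hΦ))
          (integrable_posterior hΦ0 hΦ.aemeasurable (hΦ.sub hΨ).abs)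
          fun x => by rw [abs_sub_comm]; exact le_abs_self _
    _ = ∫ x, (exp (-Φ x) / Z) * |Φ x - Ψ x| ∂μ := integral_tilted _ _
    _ ≤ ∫ x, |Φ x - Ψ x| / Z ∂μ := by
        refine integral_mono_of_nonneg (ae_of_all _ fun x => by positivity)
          ((hΦ.sub hΨ).abs.div_const Z) (ae_of_all _ fun x => ?_)
        dsimp only
        rw [div_mul_eq_mul_div]
        gcongr
        exact mul_le_of_le_one_left (abs_nonneg _) (exp_le_one_iff.2 (by linarith [hΦ0 x]))
    _ = (∫ x, |Φ x - Ψ x| ∂μ) / Z := integral_div _ _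

lemma log_integral_exp_neg_sub_le (hΦ0 : ∀ x, 0 ≤ Φ x) (hΨ0 : ∀ x, 0 ≤ Ψ x)
    (hΦ : Integrable Φ μ) (hΨ : Integrable Ψ μ) :
    log (∫ x, exp (-Ψ x) ∂μ) - log (∫ x, exp (-Φ x) ∂μ) ≤
      (∫ x, |Φ x - Ψ x| ∂μ) / ∫ x, exp (-Φ x) ∂μ := by
  have hexpΦ := integrable_exp_neg hΦ0 hΦ.aemeasurable
  have hexpΨ := integrable_exp_neg hΨ0 hΨ.aemeasurable
  set ZΦ := ∫ x, exp (-Φ x) ∂μ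
  set ZΨ := ∫ x, exp (-Ψ x) ∂μ
  have hZΦ : 0 < ZΦ := integral_exp_pos hexpΦ
  have hZΨ : 0 < ZΨ := integral_exp_pos hexpΨ
  have hZ : ZΨ - ZΦ ≤ ∫ x, |Φ x - Ψ x| ∂μ := by
    rw [← integral_sub hexpΨ hexpΦ]
    exact integral_mono (hexpΨ.sub hexpΦ) (hΦ.sub hΨ).abs
      fun x => exp_neg_sub_exp_neg_le_abs (hΨ0 x)
  calc log ZΨ - log ZΦ = log (ZΨ / ZΦ) := (log_div hZΨ.ne' hZΦ.ne').symm
    _ ≤ ZΨ / ZΦ - 1 := log_le_sub_one_of_pos (div_pos hZΨ hZΦ)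
    _ = (ZΨ - ZΦ) / ZΦ := by field_simp
    _ ≤ (∫ x, |Φ x - Ψ x| ∂μ) / ZΦ := by gcongr

theorem KLdiv_posterior_le (hΦ0 : ∀ x, 0 ≤ Φ x) (hΨ0 : ∀ x, 0 ≤ Ψ x)
    (hΦ : Integrable Φ μ) (hΨ : Integrable Ψ μ) :
    KLdiv (posterior μ Φ) (posterior μ Ψ) ≤
      ENNReal.ofReal (2 * exp (∫ x, |Φ x| ∂μ) * ∫ x, |Φ x - Ψ x| ∂μ) := by
  have hexpΦ := integrable_exp_neg hΦ0 hΦ.aemeasurable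
  set Z := ∫ x, exp (-Φ x) ∂μ
  set D := ∫ x, |Φ x - Ψ x| ∂μ
  have hZinv : Z⁻¹ ≤ exp (∫ x, |Φ x| ∂μ) := by
    have hjensen := exp_neg_integral_le_integral_exp_neg hΦ hexpΦ
    rw [integral_congr_ae (ae_of_all _ fun x => abs_of_nonneg (hΦ0 x))]
    exact (inv_anti₀ (exp_pos _) hjensen).trans_eq (by rw [exp_neg, inv_inv])
  have hdiff : ∫ x, (-Φ x - -Ψ x) ∂posterior μ Φ ≤ D / Z := by
    simpa only [sub_neg_eq_add, neg_add_eq_sub] using integral_sub_posterior_le hΦ0 hΦ hΨ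
  rw [posterior_eq_tilted, posterior_eq_tilted, KLdiv_tilted_tilted hexpΦ
    (integrable_exp_neg hΨ0 hΨ.aemeasurable)
    (integrable_posterior hΦ0 hΦ.aemeasurable (hΦ.neg.sub hΨ.neg))]
  refine ENNReal.ofReal_le_ofReal ?_
  calc _ ≤ D / Z + D / Z := add_le_add hdiff (log_integral_exp_neg_sub_le hΦ0 hΨ0 hΦ hΨ)
    _ = 2 * Z⁻¹ * D := by ring
    _ ≤ 2 * exp (∫ x, |Φ x| ∂μ) * D := by gcongr

end Potential

theorem stmt0_general {X : Type*} [MeasurableSpace X] (μ : Measure X) [IsProbabilityMeasure μ]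
    (Φ₁ Φ₂ : X → ℝ)
    (hΦ₁0 : ∀ x, 0 ≤ Φ₁ x) (hΦ₂0 : ∀ x, 0 ≤ Φ₂ x)
    (hΦ₁i : Integrable Φ₁ μ) (hΦ₂i : Integrable Φ₂ μ) :
    KLdiv (posterior μ Φ₁) (posterior μ Φ₂) ≤
      ENNReal.ofReal (2 * Real.exp ((∫ x, |Φ₁ x| ∂μ) + ∫ x, |Φ₁ x - Φ₂ x| ∂μ) *
        ∫ x, |Φ₁ x - Φ₂ x| ∂μ) ∧
    posterior μ Φ₁ ≪ posterior μ Φ₂ ∧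
    max (KLdiv (posterior μ Φ₁) (posterior μ Φ₂)) (KLdiv (posterior μ Φ₂) (posterior μ Φ₁)) ≤
      ENNReal.ofReal (2 * Real.exp (2 * (∫ x, |Φ₁ x| ∂μ) + 2 * ∫ x, |Φ₂ x| ∂μ) *
        ∫ x, |Φ₁ x - Φ₂ x| ∂μ) ∧
    posterior μ Φ₂ ≪ posterior μ Φ₁ := by
  have h₁₂ := KLdiv_posterior_le hΦ₁0 hΦ₂0 hΦ₁i hΦ₂i
  have h₂₁ := KLdiv_posterior_le hΦ₂0 hΦ₁0 hΦ₂i hΦ₁i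
  simp_rw [abs_sub_comm (Φ₂ _)] at h₂₁
  have hA₁ : 0 ≤ ∫ x, |Φ₁ x| ∂μ := integral_nonneg fun x => abs_nonneg _
  have hA₂ : 0 ≤ ∫ x, |Φ₂ x| ∂μ := integral_nonneg fun x => abs_nonneg _
  have hD : 0 ≤ ∫ x, |Φ₁ x - Φ₂ x| ∂μ := integral_nonneg fun x => abs_nonneg _
  refine ⟨h₁₂.trans ?_, tilted_absolutelyContinuous_tilted
      (integrable_exp_neg hΦ₂0 hΦ₂i.aemeasurable),
    max_le (h₁₂.trans ?_) (h₂₁.trans ?_), tilted_absolutelyContinuous_tilted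
      (integrable_exp_neg hΦ₁0 hΦ₁i.aemeasurable)⟩ <;>
  exact ENNReal.ofReal_le_ofReal (by gcongr; linarith)

theorem stmt0 {X : Type*} [MeasurableSpace X] (μ : Measure X) [IsProbabilityMeasure μ]
    (Φ₁ Φ₂ : X → ℝ) (hΦ₁m : Measurable Φ₁) (hΦ₂m : Measurable Φ₂)
    (hΦ₁0 : ∀ x, 0 ≤ Φ₁ x) (hΦ₂0 : ∀ x, 0 ≤ Φ₂ x)
    (hΦ₁i : Integrable Φ₁ μ) (hΦ₂i : Integrable Φ₂ μ) :
    KLdiv (posterior μ Φ₁) (posterior μ Φ₂) ≤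
      ENNReal.ofReal (2 * Real.exp ((∫ x, |Φ₁ x| ∂μ) + ∫ x, |Φ₁ x - Φ₂ x| ∂μ) *
        ∫ x, |Φ₁ x - Φ₂ x| ∂μ) ∧
    posterior μ Φ₁ ≪ posterior μ Φ₂ ∧
    max (KLdiv (posterior μ Φ₁) (posterior μ Φ₂)) (KLdiv (posterior μ Φ₂) (posterior μ Φ₁)) ≤
      ENNReal.ofReal (2 * Real.exp (2 * (∫ x, |Φ₁ x| ∂μ) + 2 * ∫ x, |Φ₂ x| ∂μ) *
        ∫ x, |Φ₁ x - Φ₂ x| ∂μ) ∧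
    posterior μ Φ₂ ≪ posterior μ Φ₁ :=
  stmt0_general μ Φ₁ Φ₂ hΦ₁0 hΦ₂0 hΦ₁i hΦ₂i
end

section
/- If the best misfit Φ^† and the approximate misfit Φ^a both belong to L¹_{μ_θ}, then ‖Φ^† − Φ^a‖_{L¹_{μ_θ}} ≤ 2^{−1/2} · ‖ |O δ^†|²_{Σ_η^{−1}} ‖_{L¹_{μ_θ}}^{1/2} · ( ‖Φ^†‖_{L¹_{μ_θ}}^{1/2} + ‖Φ^a‖_{L¹_{μ_θ}}^{1/2} ), where |O δ^†(θ)|²_{Σ_η^{−1}} denotes the squared Σ_η^{−1}-weighted Euclidean norm of the observed model error. -/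
open MeasureTheory Real Matrix

/-! Factor `Σ_η⁻¹ = Bᵀ B`: then `Φ = ½ ‖u‖²` with `u θ = B (y - O (M θ))`, and the weighted
observed model error is `‖u† - uᵃ‖²`. Pointwise,
`|‖u‖² - ‖v‖²| = |‖u‖ - ‖v‖| (‖u‖ + ‖v‖) ≤ ‖u - v‖ (‖u‖ + ‖v‖)`,
and integrating and applying Cauchy–Schwarz in `L²(μ)` to each of the two products gives the
bound. -/

theorem Matrix.PosSemidef.exists_linearMap_dotProduct_mulVec_self_eq_norm_sq
    {n : Type*} [Fintype n] [DecidableEq n] {L : Matrix n n ℝ} (hL : L.PosSemidef) :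
    ∃ R : (n → ℝ) →ₗ[ℝ] EuclideanSpace ℝ n, ∀ v, v ⬝ᵥ L *ᵥ v = ‖R v‖ ^ 2 := by
  open scoped MatrixOrder in
  obtain ⟨B, rfl⟩ := CStarAlgebra.nonneg_iff_eq_star_mul_self.mp hL.nonneg
  refine ⟨(WithLp.linearEquiv 2 ℝ (n → ℝ)).symm.toLinearMap ∘ₗ Matrix.toLin' B, fun v => ?_⟩
  rw [EuclideanSpace.real_norm_sq_eq, ← mulVec_mulVec, dotProduct_mulVec, star_eq_conjTranspose,
    conjTranspose_eq_transpose_of_trivial, vecMul_transpose]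
  simp [dotProduct, sq]

theorem abs_sq_norm_sub_sq_norm_le {E : Type*} [SeminormedAddCommGroup E] (a b : E) :
    |‖a‖ ^ 2 - ‖b‖ ^ 2| ≤ ‖a - b‖ * (‖a‖ + ‖b‖) := by
  rw [sq_sub_sq, abs_mul, abs_of_nonneg (by positivity : 0 ≤ ‖a‖ + ‖b‖), mul_comm]
  exact mul_le_mul_of_nonneg_right (abs_norm_sub_norm_le a b) (by positivity)

section Integral

variable {X : Type*} [MeasurableSpace X] {μ : Measure X}

theorem integral_mul_le_sqrt_mul_sqrt_of_nonneg {f g : X → ℝ} (hf0 : 0 ≤ᵐ[μ] f) (hg0 : 0 ≤ᵐ[μ] g)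
    (hf : MemLp f 2 μ) (hg : MemLp g 2 μ) :
    ∫ x, f x * g x ∂μ ≤ √(∫ x, f x ^ 2 ∂μ) * √(∫ x, g x ^ 2 ∂μ) := by
  have h := integral_mul_le_Lp_mul_Lq_of_nonneg Real.HolderConjugate.two_two hf0 hg0
    (by simpa using hf) (by simpa using hg)
  rw [Real.sqrt_eq_rpow, Real.sqrt_eq_rpow]
  simpa using h

theorem integral_abs_sq_norm_sub_sq_norm_le {E : Type*} [NormedAddCommGroup E] {f g : X → E}
    (hf : MemLp f 2 μ) (hg : MemLp g 2 μ) :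
    ∫ x, |‖f x‖ ^ 2 - ‖g x‖ ^ 2| ∂μ ≤
      √(∫ x, ‖f x - g x‖ ^ 2 ∂μ) * (√(∫ x, ‖f x‖ ^ 2 ∂μ) + √(∫ x, ‖g x‖ ^ 2 ∂μ)) := by
  have hfg := hf.sub hg
  have hf2 := (memLp_two_iff_integrable_sq_norm hf.1).mp hf
  have hg2 := (memLp_two_iff_integrable_sq_norm hg.1).mp hg
  have cs : ∀ {h : X → E}, MemLp h 2 μ →
      ∫ x, ‖f x - g x‖ * ‖h x‖ ∂μ ≤ √(∫ x, ‖f x - g x‖ ^ 2 ∂μ) * √(∫ x, ‖h x‖ ^ 2 ∂μ) :=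
    fun hh => integral_mul_le_sqrt_mul_sqrt_of_nonneg (ae_of_all _ fun _ => norm_nonneg _)
      (ae_of_all _ fun _ => norm_nonneg _) hfg.norm hh.norm
  calc ∫ x, |‖f x‖ ^ 2 - ‖g x‖ ^ 2| ∂μ
      ≤ ∫ x, ‖f x - g x‖ * ‖f x‖ + ‖f x - g x‖ * ‖g x‖ ∂μ := by
        refine integral_mono (hf2.sub hg2).abs
          ((hfg.norm.integrable_mul hf.norm).add (hfg.norm.integrable_mul hg.norm)) fun x => ?_
        simpa only [mul_add] using abs_sq_norm_sub_sq_norm_le (f x) (g x)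
    _ = ∫ x, ‖f x - g x‖ * ‖f x‖ ∂μ + ∫ x, ‖f x - g x‖ * ‖g x‖ ∂μ :=
        integral_add (hfg.norm.integrable_mul hf.norm) (hfg.norm.integrable_mul hg.norm)
    _ ≤ _ := by rw [mul_add]; exact add_le_add (cs hf) (cs hg)

end Integral

theorem stmt1_general {X U : Type*} [MeasurableSpace X] [NormedAddCommGroup U] [NormedSpace ℝ U]
    [MeasurableSpace U] [BorelSpace U]
    (μ : Measure X) {n : ℕ}
    (Mdag Mappr : X → U) (hMdag : Measurable Mdag) (hMappr : Measurable Mappr)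
    (O : U →L[ℝ] (Fin n → ℝ)) (y : Fin n → ℝ)
    (Γ : Matrix (Fin n) (Fin n) ℝ) (hΓ : Γ.PosDef)
    (Φdag Φappr : X → ℝ)
    (hΦdag : Φdag = fun θ => (1/2) * ((y - O (Mdag θ)) ⬝ᵥ (Γ⁻¹ *ᵥ (y - O (Mdag θ)))))
    (hΦappr : Φappr = fun θ => (1/2) * ((y - O (Mappr θ)) ⬝ᵥ (Γ⁻¹ *ᵥ (y - O (Mappr θ)))))
    (hid : Integrable Φdag μ) (hia : Integrable Φappr μ) :
    ∫ θ, |Φdag θ - Φappr θ| ∂μ ≤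
      (Real.sqrt 2)⁻¹ *
        Real.sqrt (∫ θ, |(O (Mdag θ - Mappr θ)) ⬝ᵥ (Γ⁻¹ *ᵥ (O (Mdag θ - Mappr θ)))| ∂μ) *
        (Real.sqrt (∫ θ, |Φdag θ| ∂μ) + Real.sqrt (∫ θ, |Φappr θ| ∂μ)) := by
  obtain ⟨R, hR⟩ := hΓ.inv.posSemidef.exists_linearMap_dotProduct_mulVec_self_eq_norm_sq
  set u : X → EuclideanSpace ℝ (Fin n) := fun θ => R (y - O (Mdag θ))
  set v : X → EuclideanSpace ℝ (Fin n) := fun θ => R (y - O (Mappr θ))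
  have hΦu : Φdag = fun θ => ‖u θ‖ ^ 2 / 2 := by rw [hΦdag]; ext θ; rw [hR]; ring
  have hΦv : Φappr = fun θ => ‖v θ‖ ^ 2 / 2 := by rw [hΦappr]; ext θ; rw [hR]; ring
  have hδ : ∀ θ, O (Mdag θ - Mappr θ) ⬝ᵥ Γ⁻¹ *ᵥ O (Mdag θ - Mappr θ) = ‖u θ - v θ‖ ^ 2 := by
    intro θ
    have hOδ : O (Mdag θ - Mappr θ) = (y - O (Mappr θ)) - (y - O (Mdag θ)) := by
      rw [map_sub]; abel
    rw [hR, hOδ, map_sub, norm_sub_rev]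
  have hmemLp : ∀ {M : X → U}, Measurable M →
      Integrable (fun θ => ‖R (y - O (M θ))‖ ^ 2 / 2) μ → MemLp (fun θ => R (y - O (M θ))) 2 μ := by
    intro M hM hi
    refine (memLp_two_iff_integrable_sq_norm ?_).mpr ?_
    · exact (R.continuous_of_finiteDimensional.measurable.comp
        (measurable_const.sub (O.continuous.measurable.comp hM))).aestronglyMeasurable
    · exact (hi.const_mul 2).congr (ae_of_all _ fun _ => by ring)
  have key := integral_abs_sq_norm_sub_sq_norm_le (hmemLp hMdag (hΦu ▸ hid))
    (hmemLp hMappr (hΦv ▸ hia))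
  subst hΦu hΦv
  simp only [hδ, ← sub_div, abs_div, abs_two, abs_pow, abs_norm, integral_div]
  rw [Real.sqrt_div' _ zero_le_two, Real.sqrt_div' _ zero_le_two]
  field_simp
  rw [Real.sq_sqrt zero_le_two]
  linarith

theorem stmt1 {X U : Type*} [MeasurableSpace X] [NormedAddCommGroup U] [NormedSpace ℝ U]
    [CompleteSpace U] [MeasurableSpace U] [BorelSpace U]
    (μ : Measure X) [IsProbabilityMeasure μ] {n : ℕ}
    (Mdag Mappr : X → U) (hMdag : Measurable Mdag) (hMappr : Measurable Mappr)
    (O : U →L[ℝ] (Fin n → ℝ)) (y : Fin n → ℝ)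
    (Γ : Matrix (Fin n) (Fin n) ℝ) (hΓ : Γ.PosDef)
    (Φdag Φappr : X → ℝ)
    (hΦdag : Φdag = fun θ => (1/2) * ((y - O (Mdag θ)) ⬝ᵥ (Γ⁻¹ *ᵥ (y - O (Mdag θ)))))
    (hΦappr : Φappr = fun θ => (1/2) * ((y - O (Mappr θ)) ⬝ᵥ (Γ⁻¹ *ᵥ (y - O (Mappr θ)))))
    (hid : Integrable Φdag μ) (hia : Integrable Φappr μ) :
    ∫ θ, |Φdag θ - Φappr θ| ∂μ ≤
      (Real.sqrt 2)⁻¹ *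
        Real.sqrt (∫ θ, |(O (Mdag θ - Mappr θ)) ⬝ᵥ (Γ⁻¹ *ᵥ (O (Mdag θ - Mappr θ)))| ∂μ) *
        (Real.sqrt (∫ θ, |Φdag θ| ∂μ) + Real.sqrt (∫ θ, |Φappr θ| ∂μ)) :=
  stmt1_general μ Mdag Mappr hMdag hMappr O y Γ hΓ Φdag Φappr hΦdag hΦappr hid hia
end

section
/- If the best misfit Φ^† and the enhanced noise misfit Φ^e both belong to L¹_{μ_θ}, then ‖Φ^† − Φ^e‖_{L¹_{μ_θ}} ≤ 2^{−1/2} · ‖ |O(δ^† − m_ε)|²_{Σ_η^{−1}} ‖_{L¹_{μ_θ}}^{1/2} · ( ‖Φ^†‖_{L¹_{μ_θ}}^{1/2} + C_e · ‖Φ^e‖_{L¹_{μ_θ}}^{1/2} ) + 2^{−1} · ‖ |y − O∘M − O m_ε|²_{Σ_η^{−1} − (Σ_η+S)^{−1}} ‖_{L¹_{μ_θ}}, where |z|²_{Σ_η^{−1} − (Σ_η+S)^{−1}} := |z|²_{Σ_η^{−1}} − |z|²_{(Σ_η+S)^{−1}}. -/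
open MeasureTheory Real Matrix

/-- The ℓ²→ℓ² operator norm of a real square matrix. -/
noncomputable def matOpNorm {n : ℕ} (A : Matrix (Fin n) (Fin n) ℝ) : ℝ :=
  ‖LinearMap.toContinuousLinearMap (Matrix.toEuclideanLin A)‖

/-- The square root of a positive semidefinite matrix, as defined in the older Mathlib
(removed since). -/
noncomputable def Matrix.PosSemidef.sqrt {n : Type*} [Fintype n] [DecidableEq n]
    {A : Matrix n n ℝ} (hA : A.PosSemidef) : Matrix n n ℝ :=
  hA.1.eigenvectorUnitary.1 * diagonal ((↑) ∘ Real.sqrt ∘ hA.1.eigenvalues) *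
    (star hA.1.eigenvectorUnitary : Matrix n n ℝ)

/-! Put `a := y - O M†`, `b := y - O M - O mε` and `u := Γ^{-1/2} a`, `v := Γ^{-1/2} b`,
`w := (Γ + S)^{-1/2} b` in Euclidean space, so that `Φ† = ‖u‖²/2`, `Φᵉ = ‖w‖²/2` and
`v - u = Γ^{-1/2} O (δ† - mε)`. Split `‖u‖² - ‖w‖² = (‖u‖² - ‖v‖²) + (‖v‖² - ‖w‖²)`. The
second part is integrated as it stands; the first is at most `‖v - u‖ (‖u‖ + ‖v‖)`, and
`‖v‖ ≤ Cₑ ‖w‖` since `Γ^{-1/2} = (Γ^{-1/2} (Γ + S)^{1/2}) (Γ + S)^{-1/2}`; Cauchy–Schwarz in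
`L²(μ)` then bounds its integral. -/

namespace Matrix

variable {m : Type*} [Fintype m] [DecidableEq m] {A : Matrix m m ℝ}

open scoped MatrixOrder

lemma PosSemidef.sqrt_eq_cfcSqrt (hA : A.PosSemidef) : hA.sqrt = CFC.sqrt A := by
  rw [CFC.sqrt_eq_real_sqrt A hA.nonneg, cfcₙ_eq_cfc, hA.1.cfc_eq]
  rfl

lemma PosSemidef.sqrt_mul_sqrt (hA : A.PosSemidef) : hA.sqrt * hA.sqrt = A := by
  rw [hA.sqrt_eq_cfcSqrt]
  exact CFC.sqrt_mul_sqrt_self A hA.nonneg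

lemma PosSemidef.transpose_sqrt (hA : A.PosSemidef) : hA.sqrtᵀ = hA.sqrt := by
  rw [hA.sqrt_eq_cfcSqrt, ← conjTranspose_eq_transpose_of_trivial]
  exact (CFC.sqrt_nonneg A).isSelfAdjoint

lemma PosDef.sqrt_mul_sqrt_inv (hA : A.PosDef) :
    hA.posSemidef.sqrt * hA.inv.posSemidef.sqrt = 1 := by
  have hunit : IsUnit (CFC.sqrt A) := (CFC.isUnit_sqrt_iff A hA.posSemidef.nonneg).2 hA.isUnit
  rw [PosSemidef.sqrt_eq_cfcSqrt, PosSemidef.sqrt_eq_cfcSqrt, nonsing_inv_eq_ringInverse,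
    CFC.sqrt_ringInverse, ← nonsing_inv_eq_ringInverse]
  exact mul_nonsing_inv _ ((isUnit_iff_isUnit_det _).1 hunit)

lemma PosSemidef.dotProduct_mulVec_eq_norm_sq (hA : A.PosSemidef) (x : m → ℝ) :
    x ⬝ᵥ A *ᵥ x = ‖WithLp.toLp 2 (hA.sqrt *ᵥ x)‖ ^ 2 := by
  rw [EuclideanSpace.real_norm_sq_eq]
  conv_lhs => rw [← hA.sqrt_mul_sqrt, ← mulVec_mulVec, dotProduct_mulVec, ← mulVec_transpose,
    hA.transpose_sqrt]
  simp [dotProduct, sq]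

end Matrix

lemma norm_toLp_mulVec_le_matOpNorm {n : ℕ} (A : Matrix (Fin n) (Fin n) ℝ) (x : Fin n → ℝ) :
    ‖WithLp.toLp 2 (A *ᵥ x)‖ ≤ matOpNorm A * ‖WithLp.toLp 2 x‖ :=
  (LinearMap.toContinuousLinearMap (Matrix.toEuclideanLin A)).le_opNorm (WithLp.toLp 2 x)

lemma norm_toLp_mulVec_le_matOpNorm_mul_sqrt {n : ℕ} (M : Matrix (Fin n) (Fin n) ℝ)
    {G : Matrix (Fin n) (Fin n) ℝ} (hG : G.PosDef) (x : Fin n → ℝ) :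
    ‖WithLp.toLp 2 (M *ᵥ x)‖ ≤
      matOpNorm (M * hG.posSemidef.sqrt) * ‖WithLp.toLp 2 (hG.inv.posSemidef.sqrt *ᵥ x)‖ := by
  calc ‖WithLp.toLp 2 (M *ᵥ x)‖
      = ‖WithLp.toLp 2 ((M * hG.posSemidef.sqrt) *ᵥ (hG.inv.posSemidef.sqrt *ᵥ x))‖ := by
        rw [mulVec_mulVec, mul_assoc, hG.sqrt_mul_sqrt_inv, mul_one]
    _ ≤ _ := norm_toLp_mulVec_le_matOpNorm _ _

lemma abs_norm_sq_sub_norm_sq_le {E : Type*} [SeminormedAddCommGroup E] (u v : E) :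
    |‖u‖ ^ 2 - ‖v‖ ^ 2| ≤ ‖u - v‖ * (‖u‖ + ‖v‖) := by
  rw [sq_sub_sq, abs_mul, abs_of_nonneg (by positivity), mul_comm]
  exact mul_le_mul_of_nonneg_right (abs_norm_sub_norm_le u v) (by positivity)

section L2

variable {X E : Type*} [MeasurableSpace X] {μ : Measure X} [NormedAddCommGroup E]

lemma integral_norm_mul_norm_le_sqrt {f g : X → E} (hf : MemLp f 2 μ) (hg : MemLp g 2 μ) :
    ∫ x, ‖f x‖ * ‖g x‖ ∂μ ≤ √(∫ x, ‖f x‖ ^ 2 ∂μ) * √(∫ x, ‖g x‖ ^ 2 ∂μ) := by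
  have h := integral_mul_norm_le_Lp_mul_Lq (μ := μ) (f := f) (g := g)
    Real.HolderConjugate.two_two (by rwa [ENNReal.ofReal_ofNat]) (by rwa [ENNReal.ofReal_ofNat])
  simpa only [Real.rpow_two, ← Real.sqrt_eq_rpow] using h

theorem integral_abs_norm_sq_sub_norm_sq_le {u v w : X → E} {C : ℝ} (hC : 0 ≤ C)
    (hu : MemLp u 2 μ) (hv : AEStronglyMeasurable v μ) (hw : MemLp w 2 μ)
    (hvw : ∀ x, ‖v x‖ ≤ C * ‖w x‖) :
    ∫ x, |‖u x‖ ^ 2 - ‖w x‖ ^ 2| ∂μ ≤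
      √(∫ x, ‖v x - u x‖ ^ 2 ∂μ) * (√(∫ x, ‖u x‖ ^ 2 ∂μ) + C * √(∫ x, ‖w x‖ ^ 2 ∂μ)) +
      ∫ x, |‖v x‖ ^ 2 - ‖w x‖ ^ 2| ∂μ := by
  have hv : MemLp v 2 μ := hw.of_le_mul hv (ae_of_all _ hvw)
  have hvu : MemLp (fun x => v x - u x) 2 μ := hv.sub hu
  have hpointwise : ∀ x, |‖u x‖ ^ 2 - ‖w x‖ ^ 2| ≤
      ‖v x - u x‖ * ‖u x‖ + C * (‖v x - u x‖ * ‖w x‖) + |‖v x‖ ^ 2 - ‖w x‖ ^ 2| := by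
    intro x
    have huv := abs_norm_sq_sub_norm_sq_le (u x) (v x)
    rw [norm_sub_rev] at huv
    have hvC : ‖v x - u x‖ * ‖v x‖ ≤ C * (‖v x - u x‖ * ‖w x‖) := by
      rw [mul_left_comm]
      exact mul_le_mul_of_nonneg_left (hvw x) (norm_nonneg _)
    calc |‖u x‖ ^ 2 - ‖w x‖ ^ 2|
        ≤ |‖u x‖ ^ 2 - ‖v x‖ ^ 2| + |‖v x‖ ^ 2 - ‖w x‖ ^ 2| := abs_sub_le _ _ _
      _ ≤ _ := by linarith
  have hi1 : Integrable (fun x => ‖v x - u x‖ * ‖u x‖) μ := hvu.norm.integrable_mul hu.norm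
  have hi2 : Integrable (fun x => ‖v x - u x‖ * ‖w x‖) μ := hvu.norm.integrable_mul hw.norm
  have hi12 : Integrable (fun x => ‖v x - u x‖ * ‖u x‖ + C * (‖v x - u x‖ * ‖w x‖)) μ :=
    hi1.add (hi2.const_mul C)
  have hi3 : Integrable (fun x => |‖v x‖ ^ 2 - ‖w x‖ ^ 2|) μ :=
    ((hv.integrable_norm_pow two_ne_zero).sub (hw.integrable_norm_pow two_ne_zero)).abs
  calc ∫ x, |‖u x‖ ^ 2 - ‖w x‖ ^ 2| ∂μ
      ≤ ∫ x, (‖v x - u x‖ * ‖u x‖ + C * (‖v x - u x‖ * ‖w x‖) + |‖v x‖ ^ 2 - ‖w x‖ ^ 2|) ∂μ :=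
        integral_mono_of_nonneg (ae_of_all _ fun _ => abs_nonneg _) (hi12.add hi3)
          (ae_of_all _ hpointwise)
    _ = ∫ x, ‖v x - u x‖ * ‖u x‖ ∂μ + C * ∫ x, ‖v x - u x‖ * ‖w x‖ ∂μ +
          ∫ x, |‖v x‖ ^ 2 - ‖w x‖ ^ 2| ∂μ := by
        rw [integral_add hi12 hi3, integral_add hi1 (hi2.const_mul C), integral_const_mul]
    _ ≤ _ := by
        have h1 := integral_norm_mul_norm_le_sqrt hvu hu
        have h2 := mul_le_mul_of_nonneg_left (integral_norm_mul_norm_le_sqrt hvu hw) hC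
        linarith

theorem integral_abs_half_norm_sq_sub_half_norm_sq_le {u v w : X → E} {C : ℝ} (hC : 0 ≤ C)
    (hu : AEStronglyMeasurable u μ) (hv : AEStronglyMeasurable v μ)
    (hw : AEStronglyMeasurable w μ) (hu2 : Integrable (fun x => 1 / 2 * ‖u x‖ ^ 2) μ)
    (hw2 : Integrable (fun x => 1 / 2 * ‖w x‖ ^ 2) μ) (hvw : ∀ x, ‖v x‖ ≤ C * ‖w x‖) :
    ∫ x, |1 / 2 * ‖u x‖ ^ 2 - 1 / 2 * ‖w x‖ ^ 2| ∂μ ≤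
      (√2)⁻¹ * √(∫ x, |‖v x - u x‖ ^ 2| ∂μ) *
        (√(∫ x, |1 / 2 * ‖u x‖ ^ 2| ∂μ) + C * √(∫ x, |1 / 2 * ‖w x‖ ^ 2| ∂μ)) +
      1 / 2 * ∫ x, |‖v x‖ ^ 2 - ‖w x‖ ^ 2| ∂μ := by
  have hhalf : IsUnit (1 / 2 : ℝ) := by norm_num
  have hu2 : MemLp u 2 μ :=
    (memLp_two_iff_integrable_sq_norm hu).2 ((integrable_const_mul_iff hhalf _).1 hu2)
  have hw2 : MemLp w 2 μ :=
    (memLp_two_iff_integrable_sq_norm hw).2 ((integrable_const_mul_iff hhalf _).1 hw2)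
  have key := integral_abs_norm_sq_sub_norm_sq_le hC hu2 hv hw2 hvw
  have hsqrt : (√2)⁻¹ * √(1 / 2) = 1 / 2 := by
    rw [← Real.sqrt_inv, ← Real.sqrt_mul (by norm_num)]
    norm_num
  simp only [← mul_sub, abs_mul, abs_pow, abs_norm, abs_of_pos (one_half_pos : (0 : ℝ) < 1 / 2),
    integral_const_mul, Real.sqrt_mul (by norm_num : (0 : ℝ) ≤ 1 / 2)]
  linear_combination (1 / 2) * key - √(∫ x, ‖v x - u x‖ ^ 2 ∂μ) *
    (√(∫ x, ‖u x‖ ^ 2 ∂μ) + C * √(∫ x, ‖w x‖ ^ 2 ∂μ)) * hsqrt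

end L2

theorem stmt4_general {X U : Type*} [MeasurableSpace X] [NormedAddCommGroup U] [NormedSpace ℝ U]
    [MeasurableSpace U] [BorelSpace U]
    (μ : Measure X) {n : ℕ}
    (Mdag Mappr : X → U) (hMdag : Measurable Mdag) (hMappr : Measurable Mappr)
    (O : U →L[ℝ] (Fin n → ℝ)) (y : Fin n → ℝ) (mε : U)
    (Γ : Matrix (Fin n) (Fin n) ℝ) (hΓ : Γ.PosDef)
    (S : Matrix (Fin n) (Fin n) ℝ) (hS : S.PosSemidef)
    (Ce : ℝ)
    (hCe : Ce = matOpNorm (hΓ.inv.posSemidef.sqrt * (hΓ.add_posSemidef hS).posSemidef.sqrt))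
    (Φdag Φenh : X → ℝ)
    (hΦdag : Φdag = fun θ => (1/2) * ((y - O (Mdag θ)) ⬝ᵥ (Γ⁻¹ *ᵥ (y - O (Mdag θ)))))
    (hΦenh : Φenh = fun θ => (1/2) *
      ((y - O (Mappr θ) - O mε) ⬝ᵥ ((Γ + S)⁻¹ *ᵥ (y - O (Mappr θ) - O mε))))
    (hid : Integrable Φdag μ) (hie : Integrable Φenh μ) :
    ∫ θ, |Φdag θ - Φenh θ| ∂μ ≤
      (Real.sqrt 2)⁻¹ *
        Real.sqrt (∫ θ,
          |(O (Mdag θ - Mappr θ - mε)) ⬝ᵥ (Γ⁻¹ *ᵥ (O (Mdag θ - Mappr θ - mε)))| ∂μ) *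
        (Real.sqrt (∫ θ, |Φdag θ| ∂μ) + Ce * Real.sqrt (∫ θ, |Φenh θ| ∂μ)) +
      (1/2) * ∫ θ,
        |((y - O (Mappr θ) - O mε) ⬝ᵥ (Γ⁻¹ *ᵥ (y - O (Mappr θ) - O mε))) -
          ((y - O (Mappr θ) - O mε) ⬝ᵥ ((Γ + S)⁻¹ *ᵥ (y - O (Mappr θ) - O mε)))| ∂μ := by
  subst hCe hΦdag hΦenh
  have hG := hΓ.add_posSemidef hS
  have hvu : ∀ (B : Matrix (Fin n) (Fin n) ℝ) θ,
      WithLp.toLp 2 (B *ᵥ O (Mdag θ - Mappr θ - mε)) =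
        WithLp.toLp 2 (B *ᵥ (y - O (Mappr θ) - O mε)) - WithLp.toLp 2 (B *ᵥ (y - O (Mdag θ))) := by
    intro B θ
    rw [← WithLp.toLp_sub, ← mulVec_sub, map_sub, map_sub]
    abel_nf
  simp only [hΓ.inv.posSemidef.dotProduct_mulVec_eq_norm_sq,
    hG.inv.posSemidef.dotProduct_mulVec_eq_norm_sq] at hid hie ⊢
  simp only [hvu]
  exact integral_abs_half_norm_sq_sub_half_norm_sq_le (norm_nonneg _)
    (by fun_prop : Measurable _).aestronglyMeasurable
    (by fun_prop : Measurable _).aestronglyMeasurable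
    (by fun_prop : Measurable _).aestronglyMeasurable hid hie
    (fun θ => norm_toLp_mulVec_le_matOpNorm_mul_sqrt _ hG _)

theorem stmt4 {X U : Type*} [MeasurableSpace X] [NormedAddCommGroup U] [NormedSpace ℝ U]
    [CompleteSpace U] [MeasurableSpace U] [BorelSpace U]
    (μ : Measure X) [IsProbabilityMeasure μ] {n : ℕ}
    (Mdag Mappr : X → U) (hMdag : Measurable Mdag) (hMappr : Measurable Mappr)
    (O : U →L[ℝ] (Fin n → ℝ)) (y : Fin n → ℝ) (mε : U)
    (Γ : Matrix (Fin n) (Fin n) ℝ) (hΓ : Γ.PosDef)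
    (S : Matrix (Fin n) (Fin n) ℝ) (hS : S.PosSemidef)
    (Ce : ℝ)
    (hCe : Ce = matOpNorm (hΓ.inv.posSemidef.sqrt * (hΓ.add_posSemidef hS).posSemidef.sqrt))
    (Φdag Φenh : X → ℝ)
    (hΦdag : Φdag = fun θ => (1/2) * ((y - O (Mdag θ)) ⬝ᵥ (Γ⁻¹ *ᵥ (y - O (Mdag θ)))))
    (hΦenh : Φenh = fun θ => (1/2) *
      ((y - O (Mappr θ) - O mε) ⬝ᵥ ((Γ + S)⁻¹ *ᵥ (y - O (Mappr θ) - O mε))))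
    (hid : Integrable Φdag μ) (hie : Integrable Φenh μ) :
    ∫ θ, |Φdag θ - Φenh θ| ∂μ ≤
      (Real.sqrt 2)⁻¹ *
        Real.sqrt (∫ θ,
          |(O (Mdag θ - Mappr θ - mε)) ⬝ᵥ (Γ⁻¹ *ᵥ (O (Mdag θ - Mappr θ - mε)))| ∂μ) *
        (Real.sqrt (∫ θ, |Φdag θ| ∂μ) + Ce * Real.sqrt (∫ θ, |Φenh θ| ∂μ)) +
      (1/2) * ∫ θ,
        |((y - O (Mappr θ) - O mε) ⬝ᵥ (Γ⁻¹ *ᵥ (y - O (Mappr θ) - O mε))) -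
          ((y - O (Mappr θ) - O mε) ⬝ᵥ ((Γ + S)⁻¹ *ᵥ (y - O (Mappr θ) - O mε)))| ∂μ :=
  stmt4_general μ Mdag Mappr hMdag hMappr O y mε Γ hΓ S hS Ce hCe Φdag Φenh hΦdag hΦenh hid hie
end

section
/- If the approximate misfit Φ^a is in L¹_{μ_θ} and the joint misfit Φ^j is in L¹_{μ_θ⊗μ_δ}, then ‖Φ^a − Φ^j‖_{L¹_{μ_θ⊗μ_δ}} ≤ 2^{−1/2} · ( ∫∫ |O(e(θ,w))|²_{Σ_η^{−1}} d(μ_θ⊗μ_δ)(θ,w) )^{1/2} · ( ‖Φ^j‖_{L¹_{μ_θ⊗μ_δ}}^{1/2} + ‖Φ^a‖_{L¹_{μ_θ}}^{1/2} ), where Φ^a is lifted to X × W by Φ^a(θ,w) := Φ^a(θ). Furthermore, ( ∫∫ |O(e(θ,w))|²_{Σ_η^{−1}} d(μ_θ⊗μ_δ) )^{1/2} ≤ 2^{1/2} · ( ‖Φ^j‖_{L¹_{μ_θ⊗μ_δ}}^{1/2} + ‖Φ^a‖_{L¹_{μ_θ}}^{1/2} ). -/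
/-! Factoring `Γ⁻¹ = Bᵀ B` turns both misfits into halved squared Euclidean norms,
`Φᵃ = ½‖u‖²` and `Φʲ = ½‖u - v‖²`, where `v = B O(e)` is the whitened model error.
Pointwise `|‖u‖² - ‖u - v‖²| ≤ ‖v‖ (‖u‖ + ‖u - v‖)` and `‖v‖² ≤ ‖v‖ (‖u‖ + ‖u - v‖)`;
integrating and applying Cauchy–Schwarz in `L²` gives both bounds. -/

open MeasureTheory Real Matrix

open scoped MatrixOrder in
theorem Matrix.PosSemidef.exists_linearMap_dotProduct_mulVec_eq_norm_sq {ι : Type*} [Fintype ι]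
    [DecidableEq ι] {L : Matrix ι ι ℝ} (hL : L.PosSemidef) :
    ∃ T : (ι → ℝ) →ₗ[ℝ] EuclideanSpace ℝ ι, ∀ w, w ⬝ᵥ (L *ᵥ w) = ‖T w‖ ^ 2 := by
  obtain ⟨B, rfl⟩ := CStarAlgebra.nonneg_iff_eq_star_mul_self.mp hL.nonneg
  refine ⟨(WithLp.linearEquiv 2 ℝ (ι → ℝ)).symm.toLinearMap ∘ₗ B.mulVecLin, fun w => ?_⟩
  rw [EuclideanSpace.real_norm_sq_eq, ← mulVec_mulVec, dotProduct_mulVec, star_eq_conjTranspose,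
    conjTranspose_eq_transpose_of_trivial, vecMul_transpose]
  simp [dotProduct, sq]

section NormSq

variable {E : Type*} [SeminormedAddCommGroup E]

theorem abs_norm_sq_sub_norm_sub_sq_le (u v : E) :
    |‖u‖ ^ 2 - ‖u - v‖ ^ 2| ≤ ‖v‖ * (‖u‖ + ‖u - v‖) := by
  have h : |‖u‖ - ‖u - v‖| ≤ ‖v‖ := by simpa using abs_norm_sub_norm_le u (u - v)
  calc |‖u‖ ^ 2 - ‖u - v‖ ^ 2| = |‖u‖ - ‖u - v‖| * (‖u‖ + ‖u - v‖) := by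
        rw [sq_sub_sq, abs_mul, abs_of_nonneg (by positivity : 0 ≤ ‖u‖ + ‖u - v‖), mul_comm]
    _ ≤ ‖v‖ * (‖u‖ + ‖u - v‖) := by gcongr

theorem norm_sq_le_norm_mul_norm_add_norm_sub (u v : E) :
    ‖v‖ ^ 2 ≤ ‖v‖ * (‖u‖ + ‖u - v‖) := by
  rw [sq]
  exact mul_le_mul_of_nonneg_left (norm_le_norm_add_norm_sub u v) (norm_nonneg v)

end NormSq

section SquareIntegrable

variable {α : Type*} [MeasurableSpace α] {μ : Measure α}

theorem memLp_two_of_nonneg_of_integrable_sq {f : α → ℝ} (hf₀ : ∀ x, 0 ≤ f x)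
    (hf : Integrable (fun x => f x ^ 2) μ) : MemLp f 2 μ := by
  have hf_eq : f = fun x => √(f x ^ 2) := funext fun x => (sqrt_sq (hf₀ x)).symm
  have hmeas : AEStronglyMeasurable f μ := by
    rw [hf_eq]
    exact continuous_sqrt.comp_aestronglyMeasurable hf.aestronglyMeasurable
  exact (memLp_two_iff_integrable_sq hmeas).2 hf

theorem integral_mul_le_sqrt_integral_sq_mul_sqrt_integral_sq {f g : α → ℝ}
    (hf₀ : ∀ x, 0 ≤ f x) (hg₀ : ∀ x, 0 ≤ g x) (hf : MemLp f 2 μ) (hg : MemLp g 2 μ) :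
    ∫ x, f x * g x ∂μ ≤ √(∫ x, f x ^ 2 ∂μ) * √(∫ x, g x ^ 2 ∂μ) := by
  have hpq : (2 : ℝ).HolderConjugate 2 := .two_two
  have h := integral_mul_le_Lp_mul_Lq_of_nonneg hpq (.of_forall hf₀) (.of_forall hg₀)
    (by simpa using hf) (by simpa using hg)
  simpa only [rpow_two, ← sqrt_eq_rpow] using h

variable {E : Type*} [NormedAddCommGroup E] {u v : α → E}

theorem integral_norm_mul_norm_add_norm_sub_le (hv : AEStronglyMeasurable v μ)
    (hu : Integrable (fun x => ‖u x‖ ^ 2) μ) (huv : Integrable (fun x => ‖u x - v x‖ ^ 2) μ) :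
    Integrable (fun x => ‖v x‖ * (‖u x‖ + ‖u x - v x‖)) μ ∧
    ∫ x, ‖v x‖ * (‖u x‖ + ‖u x - v x‖) ∂μ ≤
      √(∫ x, ‖v x‖ ^ 2 ∂μ) * (√(∫ x, ‖u x‖ ^ 2 ∂μ) + √(∫ x, ‖u x - v x‖ ^ 2 ∂μ)) := by
  have hu₂ : MemLp (fun x => ‖u x‖) 2 μ :=
    memLp_two_of_nonneg_of_integrable_sq (fun _ => norm_nonneg _) hu
  have huv₂ : MemLp (fun x => ‖u x - v x‖) 2 μ :=
    memLp_two_of_nonneg_of_integrable_sq (fun _ => norm_nonneg _) huv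
  have hv₂ : MemLp (fun x => ‖v x‖) 2 μ := by
    refine (hu₂.add huv₂).of_le hv.norm (.of_forall fun x => ?_)
    rw [norm_norm, Pi.add_apply, Real.norm_of_nonneg (by positivity)]
    exact norm_le_norm_add_norm_sub (u x) (v x)
  have hvu : Integrable (fun x => ‖v x‖ * ‖u x‖) μ := hv₂.integrable_mul hu₂
  have hvuv : Integrable (fun x => ‖v x‖ * ‖u x - v x‖) μ := hv₂.integrable_mul huv₂
  simp only [mul_add]
  refine ⟨hvu.add hvuv, ?_⟩
  rw [integral_add hvu hvuv]
  gcongr <;> exact integral_mul_le_sqrt_integral_sq_mul_sqrt_integral_sq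
    (fun _ => norm_nonneg _) (fun _ => norm_nonneg _) hv₂ ‹_›

theorem integral_abs_norm_sq_sub_norm_sub_sq_le (hv : AEStronglyMeasurable v μ)
    (hu : Integrable (fun x => ‖u x‖ ^ 2) μ) (huv : Integrable (fun x => ‖u x - v x‖ ^ 2) μ) :
    ∫ x, |‖u x‖ ^ 2 - ‖u x - v x‖ ^ 2| ∂μ ≤
      √(∫ x, ‖v x‖ ^ 2 ∂μ) * (√(∫ x, ‖u x‖ ^ 2 ∂μ) + √(∫ x, ‖u x - v x‖ ^ 2 ∂μ)) := by
  obtain ⟨hint, hle⟩ := integral_norm_mul_norm_add_norm_sub_le hv hu huv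
  refine le_trans (integral_mono (hu.sub huv).abs hint fun x => ?_) hle
  exact abs_norm_sq_sub_norm_sub_sq_le (u x) (v x)

theorem sqrt_integral_norm_sq_le_add (hv : AEStronglyMeasurable v μ)
    (hu : Integrable (fun x => ‖u x‖ ^ 2) μ) (huv : Integrable (fun x => ‖u x - v x‖ ^ 2) μ) :
    √(∫ x, ‖v x‖ ^ 2 ∂μ) ≤ √(∫ x, ‖u x‖ ^ 2 ∂μ) + √(∫ x, ‖u x - v x‖ ^ 2 ∂μ) := by
  obtain ⟨hint, hle⟩ := integral_norm_mul_norm_add_norm_sub_le hv hu huv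
  have hv_int : Integrable (fun x => ‖v x‖ ^ 2) μ :=
    hint.mono' (hv.norm.pow 2) (.of_forall fun x => by
      rw [Real.norm_of_nonneg (by positivity)]
      exact norm_sq_le_norm_mul_norm_add_norm_sub (u x) (v x))
  have hV : ∫ x, ‖v x‖ ^ 2 ∂μ ≤
      √(∫ x, ‖v x‖ ^ 2 ∂μ) * (√(∫ x, ‖u x‖ ^ 2 ∂μ) + √(∫ x, ‖u x - v x‖ ^ 2 ∂μ)) :=
    (integral_mono hv_int hint fun x => norm_sq_le_norm_mul_norm_add_norm_sub (u x) (v x)).trans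
      hle
  nth_rw 1 [← mul_self_sqrt (integral_nonneg fun x => by positivity)] at hV
  nlinarith [sqrt_nonneg (∫ x, ‖v x‖ ^ 2 ∂μ), sqrt_nonneg (∫ x, ‖u x‖ ^ 2 ∂μ),
    sqrt_nonneg (∫ x, ‖u x - v x‖ ^ 2 ∂μ)]

end SquareIntegrable

theorem stmt12_general {X W U : Type*} [MeasurableSpace X] [MeasurableSpace W]
    [NormedAddCommGroup U] [NormedSpace ℝ U]
    [MeasurableSpace U] [BorelSpace U]
    (μθ : Measure X) [IsProbabilityMeasure μθ] (μδ : Measure W) [IsProbabilityMeasure μδ]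
    {n : ℕ}
    (Mappr : X → U)
    (e : X × W → U) (he : Measurable e)
    (O : U →L[ℝ] (Fin n → ℝ)) (y : Fin n → ℝ)
    (Γ : Matrix (Fin n) (Fin n) ℝ) (hΓ : Γ.PosDef)
    (Φappr : X → ℝ) (Φjoint : X × W → ℝ)
    (hΦappr : Φappr = fun θ => (1/2) * ((y - O (Mappr θ)) ⬝ᵥ (Γ⁻¹ *ᵥ (y - O (Mappr θ)))))
    (hΦjoint : Φjoint = fun p => (1/2) *
      ((y - O (Mappr p.1) - O (e p)) ⬝ᵥ (Γ⁻¹ *ᵥ (y - O (Mappr p.1) - O (e p)))))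
    (hia : Integrable Φappr μθ) (hij : Integrable Φjoint (μθ.prod μδ)) :
    (∫ p, |Φappr p.1 - Φjoint p| ∂(μθ.prod μδ)) ≤
      (Real.sqrt 2)⁻¹ *
        Real.sqrt (∫ p, |(O (e p)) ⬝ᵥ (Γ⁻¹ *ᵥ (O (e p)))| ∂(μθ.prod μδ)) *
        (Real.sqrt (∫ p, |Φjoint p| ∂(μθ.prod μδ)) + Real.sqrt (∫ θ, |Φappr θ| ∂μθ)) ∧
    Real.sqrt (∫ p, |(O (e p)) ⬝ᵥ (Γ⁻¹ *ᵥ (O (e p)))| ∂(μθ.prod μδ)) ≤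
      Real.sqrt 2 *
        (Real.sqrt (∫ p, |Φjoint p| ∂(μθ.prod μδ)) + Real.sqrt (∫ θ, |Φappr θ| ∂μθ)) := by
  obtain ⟨T, hT⟩ := hΓ.inv.posSemidef.exists_linearMap_dotProduct_mulVec_eq_norm_sq
  set u : X × W → EuclideanSpace ℝ (Fin n) := fun p => T (y - O (Mappr p.1))
  set v : X × W → EuclideanSpace ℝ (Fin n) := fun p => T (O (e p))
  have hv : AEStronglyMeasurable v (μθ.prod μδ) :=
    ((T.continuous_of_finiteDimensional.comp O.continuous).measurable.comp
      he).aestronglyMeasurable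
  have hΦa : ∀ p : X × W, Φappr p.1 = ‖u p‖ ^ 2 / 2 := fun p => by
    simp only [hΦappr, hT, map_sub, u]; ring
  have hΦj : ∀ p, Φjoint p = ‖u p - v p‖ ^ 2 / 2 := fun p => by
    simp only [hΦjoint, hT, map_sub, u, v]; ring
  have hV : ∀ p, |(O (e p)) ⬝ᵥ (Γ⁻¹ *ᵥ (O (e p)))| = ‖v p‖ ^ 2 := fun p => by simp [hT, v]
  have hu : Integrable (fun p => ‖u p‖ ^ 2) (μθ.prod μδ) :=
    ((hia.comp_fst μδ).const_mul 2).congr (.of_forall fun p => by simp only [hΦa]; ring)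
  have huv : Integrable (fun p => ‖u p - v p‖ ^ 2) (μθ.prod μδ) :=
    (hij.const_mul 2).congr (.of_forall fun p => by simp only [hΦj]; ring)
  have hA : ∫ θ, |Φappr θ| ∂μθ = ∫ p, |Φappr p.1| ∂(μθ.prod μδ) := by
    rw [integral_fun_fst (fun θ => |Φappr θ|)]; simp
  rw [hA]
  simp only [hΦa, hΦj, hV, ← sub_div, abs_div, abs_pow, abs_norm, abs_two, integral_div]
  have h₁ := integral_abs_norm_sq_sub_norm_sub_sq_le hv hu huv
  have h₂ := sqrt_integral_norm_sq_le_add hv hu huv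
  rw [sqrt_div' _ zero_le_two, sqrt_div' _ zero_le_two]
  have hs : (0 : ℝ) < √2 := by positivity
  constructor
  · field_simp
    rw [sq_sqrt zero_le_two]
    linarith
  · field_simp
    linarith

theorem stmt12 {X W U : Type*} [MeasurableSpace X] [MeasurableSpace W]
    [NormedAddCommGroup U] [NormedSpace ℝ U] [CompleteSpace U]
    [MeasurableSpace U] [BorelSpace U]
    (μθ : Measure X) [IsProbabilityMeasure μθ] (μδ : Measure W) [IsProbabilityMeasure μδ]
    {n : ℕ}
    (Mappr : X → U) (hMappr : Measurable Mappr)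
    (e : X × W → U) (he : Measurable e)
    (O : U →L[ℝ] (Fin n → ℝ)) (y : Fin n → ℝ)
    (Γ : Matrix (Fin n) (Fin n) ℝ) (hΓ : Γ.PosDef)
    (Φappr : X → ℝ) (Φjoint : X × W → ℝ)
    (hΦappr : Φappr = fun θ => (1/2) * ((y - O (Mappr θ)) ⬝ᵥ (Γ⁻¹ *ᵥ (y - O (Mappr θ)))))
    (hΦjoint : Φjoint = fun p => (1/2) *
      ((y - O (Mappr p.1) - O (e p)) ⬝ᵥ (Γ⁻¹ *ᵥ (y - O (Mappr p.1) - O (e p)))))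
    (hia : Integrable Φappr μθ) (hij : Integrable Φjoint (μθ.prod μδ)) :
    (∫ p, |Φappr p.1 - Φjoint p| ∂(μθ.prod μδ)) ≤
      (Real.sqrt 2)⁻¹ *
        Real.sqrt (∫ p, |(O (e p)) ⬝ᵥ (Γ⁻¹ *ᵥ (O (e p)))| ∂(μθ.prod μδ)) *
        (Real.sqrt (∫ p, |Φjoint p| ∂(μθ.prod μδ)) + Real.sqrt (∫ θ, |Φappr θ| ∂μθ)) ∧
    Real.sqrt (∫ p, |(O (e p)) ⬝ᵥ (Γ⁻¹ *ᵥ (O (e p)))| ∂(μθ.prod μδ)) ≤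
      Real.sqrt 2 *
        (Real.sqrt (∫ p, |Φjoint p| ∂(μθ.prod μδ)) + Real.sqrt (∫ θ, |Φappr θ| ∂μθ)) :=
  stmt12_general μθ μδ Mappr e he O y Γ hΓ Φappr Φjoint hΦappr hΦjoint hia hij
end
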